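/- arXiv:2604.21548 — 2 statements merged into one kernel-verified Lean document; each statement's English description precedes it below -/
import Mathlib

section
/- Let ν be a Borel probability measure on a compact interval [a, b] ⊂ ℝ, absolutely continuous with respect to Lebesgue measure with strictly positive continuous density, and let G(y) := ν([a, y]) with quantile function G⁻¹. Let ψ : ℝ → ℝ be strictly convex and differentiable, fix m ∈ (a, b), and set B(u) := ψ(G⁻¹(u)) − ψ(m) − (G⁻¹(u) − m)·ψ'(m) for u ∈ [0, 1]. For ε > 0 let p_ε be the probability density on [0, 1] proportional to exp(−B(u)/ε). Then as ε → 0⁺: (i) ∫₀¹ u p_ε(u) du → G(m), and (ii) ∫₀¹ (u − ∫₀¹ u' p_ε(u') du')² p_ε(u) du → 0; that is, the conditional rank distribution concentrates at rank G(m) with vanishing variance (rank stickiness). -/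
/-!
On `[a, b]` the distribution function `G` is a continuous increasing bijection onto `[0, 1]`, so
the quantile function coincides, except at `u = 0`, with the continuous inverse `H` of `G`. Thus
`B = B_ψ(H · ∣ m)` almost everywhere, a continuous exponent which by strict convexity of `ψ`
vanishes only at `u₀ = G m`. Laplace's principle then applies: away from `u₀` we have `B ≥ c > 0`,
while `B < c / 2` on an open neighbourhood of `u₀`, so the normalised weights `exp (-B / ε) / Z_ε`
are `O(exp (-c / (2ε)))` away from `u₀` and form peak functions concentrating at `u₀`. Hence the
Gibbs average of every continuous function converges to its value at `u₀`, and the variance,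
which equals `E[(u - u₀)²] - (E[u] - u₀)²`, tends to `0`.
-/

open MeasureTheory Set Filter Function Topology

noncomputable def bregmanDiv (ψ : ℝ → ℝ) (m y : ℝ) : ℝ :=
  ψ y - ψ m - (y - m) * deriv ψ m

theorem StrictConvexOn.bregmanDiv_pos {ψ : ℝ → ℝ} {S : Set ℝ} (hψ : StrictConvexOn ℝ S ψ)
    {m y : ℝ} (hm : m ∈ S) (hy : y ∈ S) (hψm : DifferentiableAt ℝ ψ m) (hym : y ≠ m) :
    0 < bregmanDiv ψ m y := by
  unfold bregmanDiv
  rcases hym.lt_or_gt with h | h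
  · have := hψ.slope_lt_deriv hy hm h hψm
    rw [slope_def_field, div_lt_iff₀ (sub_pos.2 h)] at this
    nlinarith
  · have := hψ.deriv_lt_slope hm hy h hψm
    rw [slope_def_field, lt_div_iff₀ (sub_pos.2 h)] at this
    nlinarith

theorem bregmanDiv_self (ψ : ℝ → ℝ) (m : ℝ) : bregmanDiv ψ m m = 0 := by
  simp [bregmanDiv]

section MonotoneContinuity

variable {α β : Type*} [LinearOrder α] [TopologicalSpace α] [OrderTopology α]
  [LinearOrder β] [TopologicalSpace β] [OrderTopology β] [DenselyOrdered β]

theorem MonotoneOn.continuousOn_of_ordConnected_image {f : α → β} {s : Set α}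
    (hf : MonotoneOn f s) (hfs : (f '' s).OrdConnected) : ContinuousOn f s := by
  intro x hx
  refine tendsto_order.2 ⟨fun y hy => ?_, fun y hy => ?_⟩
  · by_cases hw : ∃ w ∈ s, f w ∈ Ioo y (f x)
    · obtain ⟨w, hws, hyw, hwx⟩ := hw
      have hwx' : w < x := lt_of_not_ge fun h => (hf hx hws h).not_gt hwx
      filter_upwards [nhdsWithin_le_nhds (Ioi_mem_nhds hwx'), self_mem_nhdsWithin]
        with z hwz hzs using hyw.trans_le (hf hws hzs (le_of_lt hwz))
    · refine eventually_nhdsWithin_of_forall fun z hzs => lt_of_not_ge fun hzy => hw ?_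
      obtain ⟨y', hyy', hy'x⟩ := exists_between hy
      obtain ⟨w, hws, hw⟩ := hfs.out (mem_image_of_mem f hzs) (mem_image_of_mem f hx)
        ⟨hzy.trans hyy'.le, hy'x.le⟩
      exact ⟨w, hws, hw ▸ ⟨hyy', hy'x⟩⟩
  · by_cases hw : ∃ w ∈ s, f w ∈ Ioo (f x) y
    · obtain ⟨w, hws, hxw, hwy⟩ := hw
      have hxw' : x < w := lt_of_not_ge fun h => (hf hws hx h).not_gt hxw
      filter_upwards [nhdsWithin_le_nhds (Iio_mem_nhds hxw'), self_mem_nhdsWithin]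
        with z hzw hzs using (hf hzs hws (le_of_lt hzw)).trans_lt hwy
    · refine eventually_nhdsWithin_of_forall fun z hzs => lt_of_not_ge fun hyz => hw ?_
      obtain ⟨y', hxy', hy'y⟩ := exists_between hy
      obtain ⟨w, hws, hw⟩ := hfs.out (mem_image_of_mem f hx) (mem_image_of_mem f hzs)
        ⟨hxy'.le, hy'y.le.trans hyz⟩
      exact ⟨w, hws, hw ▸ ⟨hxy', hy'y⟩⟩

end MonotoneContinuity

/-- For a distribution function `G`, `quantile G 0 = sInf univ` is a junk value. -/
noncomputable def quantile (G : ℝ → ℝ) (u : ℝ) : ℝ :=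
  sInf {y | u ≤ G y}

section Quantile

variable {G : ℝ → ℝ} {a b : ℝ}

theorem continuousOn_invFunOn_Icc (hab : a ≤ b) (hGc : ContinuousOn G (Icc a b))
    (hGs : StrictMonoOn G (Icc a b)) :
    ContinuousOn (invFunOn G (Icc a b)) (Icc (G a) (G b)) := by
  have himage : G '' Icc a b = Icc (G a) (G b) := hGc.image_Icc_of_monotoneOn hab hGs.monotoneOn
  refine MonotoneOn.continuousOn_of_ordConnected_image ?_ ?_
  · rw [← himage]
    rintro _ ⟨x, hx, rfl⟩ _ ⟨y, hy, rfl⟩ hxy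
    rw [hGs.injOn.leftInvOn_invFunOn hx, hGs.injOn.leftInvOn_invFunOn hy]
    exact (hGs.le_iff_le hx hy).1 hxy
  · rw [← himage, hGs.injOn.invFunOn_image subset_rfl]
    exact ordConnected_Icc

theorem quantile_eq_invFunOn (hab : a ≤ b) (hGm : Monotone G)
    (hGc : ContinuousOn G (Icc a b)) (hGs : StrictMonoOn G (Icc a b)) {u : ℝ}
    (hu : u ∈ Ioc (G a) (G b)) :
    quantile G u = invFunOn G (Icc a b) u := by
  have hsurj : SurjOn G (Icc a b) (Icc (G a) (G b)) :=
    hGc.surjOn_Icc (left_mem_Icc.2 hab) (right_mem_Icc.2 hab)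
  set y := invFunOn G (Icc a b) u
  have hy : y ∈ Icc a b := hsurj.mapsTo_invFunOn (Ioc_subset_Icc_self hu)
  have hGy : G y = u := hsurj.rightInvOn_invFunOn (Ioc_subset_Icc_self hu)
  have hay : a < y := hy.1.lt_of_ne fun h => hu.1.ne' (h ▸ hGy).symm
  have hsup : {z | G y ≤ G z} = Ici y := by
    ext z
    show G y ≤ G z ↔ y ≤ z
    refine ⟨fun hz => le_of_not_gt fun hzy => hz.not_gt ?_, fun hz => hGm hz⟩
    rcases le_or_gt a z with haz | hza
    · exact hGs ⟨haz, hzy.le.trans hy.2⟩ hy hzy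
    · exact (hGm hza.le).trans_lt (hGs (left_mem_Icc.2 hab) hy hay)
  rw [quantile, ← hGy, hsup, csInf_Ici]

theorem quantile_ae_eq_invFunOn (hab : a ≤ b) (hGm : Monotone G)
    (hGc : ContinuousOn G (Icc a b)) (hGs : StrictMonoOn G (Icc a b)) :
    quantile G =ᵐ[volume.restrict (Icc (G a) (G b))] invFunOn G (Icc a b) :=
  (ae_restrict_congr_set Ioc_ae_eq_Icc).1 <| (ae_restrict_mem measurableSet_Ioc).mono
    fun _ hu => quantile_eq_invFunOn hab hGm hGc hGs hu

end Quantile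

section Laplace

variable {α : Type*} [MeasurableSpace α] {μ : Measure α} {K : Set α} {F : α → ℝ}

noncomputable def gibbsDensity (μ : Measure α) (K : Set α) (F : α → ℝ) (ε : ℝ) (x : α) : ℝ :=
  Real.exp (-F x / ε) / ∫ y in K, Real.exp (-F y / ε) ∂μ

noncomputable def gibbsAverage (μ : Measure α) (K : Set α) (F f : α → ℝ) (ε : ℝ) : ℝ :=
  (∫ x in K, f x * Real.exp (-F x / ε) ∂μ) / ∫ x in K, Real.exp (-F x / ε) ∂μ

noncomputable def gibbsVariance (μ : Measure ℝ) (K : Set ℝ) (F : ℝ → ℝ) (ε : ℝ) : ℝ :=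
  gibbsAverage μ K F (fun u => (u - gibbsAverage μ K F id ε) ^ 2) ε

theorem gibbsAverage_congr_ae {B : α → ℝ} (hBF : B =ᵐ[μ.restrict K] F) (f : α → ℝ) :
    gibbsAverage μ K B f = gibbsAverage μ K F f := by
  ext ε
  unfold gibbsAverage
  congr 1 <;> refine integral_congr_ae (hBF.mono fun x hx => ?_) <;> simp only [hx]

theorem gibbsVariance_congr_ae {μ : Measure ℝ} {K : Set ℝ} {B F : ℝ → ℝ}
    (hBF : B =ᵐ[μ.restrict K] F) : gibbsVariance μ K B = gibbsVariance μ K F := by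
  ext ε
  simp only [gibbsVariance, gibbsAverage_congr_ae hBF]

variable [TopologicalSpace α] [T2Space α] [BorelSpace α] [IsFiniteMeasureOnCompacts μ]

theorem ContinuousOn.integrableOn_exp_neg_div (hK : IsCompact K) (hF : ContinuousOn F K)
    (ε : ℝ) : IntegrableOn (fun x => Real.exp (-F x / ε)) K μ :=
  (Real.continuous_exp.comp_continuousOn (hF.neg.div_const ε)).integrableOn_compact hK

theorem setIntegral_exp_neg_div_pos (hK : IsCompact K) (hK₀ : μ K ≠ 0)
    (hF : ContinuousOn F K) (ε : ℝ) : 0 < ∫ x in K, Real.exp (-F x / ε) ∂μ :=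
  have : NeZero (μ.restrict K) := ⟨by rwa [Ne, Measure.restrict_eq_zero]⟩
  integral_exp_pos (hF.integrableOn_exp_neg_div hK ε)

theorem exp_neg_div_mul_measureReal_le_setIntegral (hK : IsCompact K) (hF : ContinuousOn F K)
    {U : Set α} (hUK : U ⊆ K) (hU : MeasurableSet U) {c ε : ℝ} (hε : 0 < ε)
    (hFU : ∀ x ∈ U, F x ≤ c) :
    Real.exp (-c / ε) * μ.real U ≤ ∫ x in K, Real.exp (-F x / ε) ∂μ :=
  calc Real.exp (-c / ε) * μ.real U ≤ ∫ x in U, Real.exp (-F x / ε) ∂μ :=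
        setIntegral_ge_of_const_le_real hU (measure_mono hUK |>.trans_lt hK.measure_lt_top).ne
          (fun x hx => Real.exp_le_exp.2 (by gcongr; exact hFU x hx))
          ((hF.integrableOn_exp_neg_div hK ε).mono_set hUK)
    _ ≤ ∫ x in K, Real.exp (-F x / ε) ∂μ :=
        setIntegral_mono_set (hF.integrableOn_exp_neg_div hK ε)
          (Eventually.of_forall fun _ => (Real.exp_pos _).le) hUK.eventuallyLE

theorem tendsto_exp_neg_div_nhdsGT_zero {c : ℝ} (hc : 0 < c) :
    Tendsto (fun ε => Real.exp (-c / ε)) (𝓝[>] 0) (𝓝 0) := by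
  have h : Tendsto (fun ε : ℝ => -(c * ε⁻¹)) (𝓝[>] 0) atBot :=
    tendsto_neg_atBot_iff.2 (tendsto_inv_nhdsGT_zero.const_mul_atTop hc)
  exact (Real.tendsto_exp_atBot.comp h).congr fun ε => by simp [div_eq_mul_inv]

variable [μ.IsOpenPosMeasure] {x₀ : α}

theorem tendstoUniformlyOn_gibbsDensity (hK : IsCompact K) (hx₀ : K ∈ 𝓝 x₀)
    (hF : ContinuousOn F K) (hF₀ : F x₀ = 0) (hFpos : ∀ x ∈ K, x ≠ x₀ → 0 < F x)
    {V : Set α} (hV : IsOpen V) (hx₀V : x₀ ∈ V) :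
    TendstoUniformlyOn (gibbsDensity μ K F) 0 (𝓝[>] 0) (K \ V) := by
  obtain ⟨c, hc, hcF⟩ := (hK.diff hV).exists_forall_le' (hF.mono sdiff_subset)
    fun x hx => hFpos x hx.1 (ne_of_mem_of_not_mem hx₀V hx.2).symm
  set U := interior K ∩ F ⁻¹' Iio (c / 2)
  have hUK : U ⊆ K := inter_subset_left.trans interior_subset
  have hU : IsOpen U := (hF.mono interior_subset).isOpen_inter_preimage isOpen_interior isOpen_Iio
  have hUpos : 0 < μ.real U := ENNReal.toReal_pos
    (hU.measure_ne_zero μ ⟨x₀, mem_interior_iff_mem_nhds.2 hx₀, by simp [hF₀, hc]⟩)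
    (measure_mono hUK |>.trans_lt hK.measure_lt_top).ne
  have hbound : ∀ ε > 0, ∀ x ∈ K \ V,
      gibbsDensity μ K F ε x ≤ Real.exp (-(c / 2) / ε) / μ.real U := by
    intro ε hε x hx
    calc gibbsDensity μ K F ε x ≤ Real.exp (-c / ε) / (Real.exp (-(c / 2) / ε) * μ.real U) :=
          div_le_div₀ (Real.exp_pos _).le (Real.exp_le_exp.2 (by gcongr; exact hcF x hx))
            (by positivity) (exp_neg_div_mul_measureReal_le_setIntegral hK hF hUK hU.measurableSet
              hε fun x hx => hx.2.le)
      _ = Real.exp (-(c / 2) / ε) / μ.real U := by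
          rw [div_mul_eq_div_div, ← Real.exp_sub]; ring_nf
  rw [Metric.tendstoUniformlyOn_iff]
  intro δ hδ
  have hlim := (tendsto_exp_neg_div_nhdsGT_zero (half_pos hc)).div_const (μ.real U)
  rw [zero_div] at hlim
  filter_upwards [hlim.eventually (gt_mem_nhds hδ), self_mem_nhdsWithin] with ε hεδ hε x hx
  have hnonneg : 0 ≤ gibbsDensity μ K F ε x := div_nonneg (Real.exp_pos _).le
    (setIntegral_exp_neg_div_pos hK (Measure.measure_pos_of_mem_nhds μ hx₀).ne' hF ε).le
  rw [Pi.zero_apply, dist_zero_left, Real.norm_of_nonneg hnonneg]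
  exact (hbound ε hε x hx).trans_lt hεδ

theorem tendsto_gibbsAverage (hK : IsCompact K) (hx₀ : K ∈ 𝓝 x₀)
    (hF : ContinuousOn F K) (hF₀ : F x₀ = 0) (hFpos : ∀ x ∈ K, x ≠ x₀ → 0 < F x)
    {f : α → ℝ} (hf : ContinuousOn f K) :
    Tendsto (gibbsAverage μ K F f) (𝓝[>] 0) (𝓝 (f x₀)) := by
  have hZ := setIntegral_exp_neg_div_pos hK (Measure.measure_pos_of_mem_nhds μ hx₀).ne' hF
  have hmass : ∀ ε, ∫ x in K, gibbsDensity μ K F ε x ∂μ = 1 := fun ε => by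
    unfold gibbsDensity
    rw [integral_div, div_self (hZ ε).ne']
  have hpeak := tendsto_setIntegral_peak_smul_of_integrableOn_of_tendsto hK.measurableSet
    hK.measurableSet subset_rfl self_mem_nhdsWithin hK.measure_lt_top.ne
    (Eventually.of_forall fun ε x _ => div_nonneg (Real.exp_pos _).le (hZ ε).le)
    (fun V hV hx₀V => tendstoUniformlyOn_gibbsDensity hK hx₀ hF hF₀ hFpos hV hx₀V)
    (tendsto_const_nhds.congr fun ε => (hmass ε).symm)
    (Eventually.of_forall fun ε =>
      ((hF.integrableOn_exp_neg_div hK ε).div_const _).aestronglyMeasurable)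
    (hf.integrableOn_compact hK) (hf x₀ (mem_of_mem_nhds hx₀))
  refine hpeak.congr fun ε => ?_
  simp only [smul_eq_mul]
  rw [gibbsAverage, ← integral_div]
  congr 1 with x
  ring

end Laplace

theorem integral_sub_sq_mul_eq {μ : Measure ℝ} {w : ℝ → ℝ} {M c : ℝ} (hw : Integrable w μ)
    (hw₁ : Integrable (fun u => u * w u) μ) (hw₂ : Integrable (fun u => (u - c) ^ 2 * w u) μ)
    (hM : ∫ u, u * w u ∂μ = M * ∫ u, w u ∂μ) :
    ∫ u, (u - M) ^ 2 * w u ∂μ = ∫ u, (u - c) ^ 2 * w u ∂μ - (M - c) ^ 2 * ∫ u, w u ∂μ := by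
  have hexpand : (fun u => (u - M) ^ 2 * w u) = fun u =>
      (u - c) ^ 2 * w u - 2 * (M - c) * (u * w u) + (2 * (M - c) * c + (M - c) ^ 2) * w u := by
    ext u; ring
  rw [hexpand, integral_add (f := fun u => (u - c) ^ 2 * w u - 2 * (M - c) * (u * w u))
    (hw₂.sub (hw₁.const_mul _)) (hw.const_mul _),
    integral_sub hw₂ (hw₁.const_mul _), integral_const_mul, integral_const_mul, hM]
  ring

section Variance

variable {μ : Measure ℝ} [IsFiniteMeasureOnCompacts μ] {K : Set ℝ} {F : ℝ → ℝ}

theorem gibbsVariance_eq (hK : IsCompact K) (hK₀ : μ K ≠ 0) (hF : ContinuousOn F K)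
    (c ε : ℝ) :
    gibbsVariance μ K F ε =
      gibbsAverage μ K F (fun u => (u - c) ^ 2) ε - (gibbsAverage μ K F id ε - c) ^ 2 := by
  have hw : ContinuousOn (fun u => Real.exp (-F u / ε)) K :=
    Real.continuous_exp.comp_continuousOn (hF.neg.div_const ε)
  have hZ := (setIntegral_exp_neg_div_pos hK hK₀ hF ε).ne'
  have hM : ∫ u in K, u * Real.exp (-F u / ε) ∂μ =
      gibbsAverage μ K F id ε * ∫ u in K, Real.exp (-F u / ε) ∂μ :=
    (div_mul_cancel₀ _ hZ).symm
  rw [gibbsVariance, gibbsAverage, integral_sub_sq_mul_eq (hw.integrableOn_compact hK)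
    ((continuousOn_id.mul hw).integrableOn_compact hK)
    ((((continuousOn_id.sub continuousOn_const).pow 2).mul hw).integrableOn_compact hK) hM,
    sub_div, mul_div_cancel_right₀ _ hZ]
  rfl

theorem tendsto_gibbsVariance [μ.IsOpenPosMeasure] {u₀ : ℝ} (hK : IsCompact K)
    (hu₀ : K ∈ 𝓝 u₀) (hF : ContinuousOn F K) (hF₀ : F u₀ = 0) (hFpos : ∀ u ∈ K, u ≠ u₀ → 0 < F u) :
    Tendsto (gibbsVariance μ K F) (𝓝[>] 0) (𝓝 0) := by
  have hmean := tendsto_gibbsAverage (μ := μ) hK hu₀ hF hF₀ hFpos continuousOn_id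
  have hsq := tendsto_gibbsAverage (μ := μ) hK hu₀ hF hF₀ hFpos
    (f := fun u => (u - u₀) ^ 2) (by fun_prop)
  have hvar := gibbsVariance_eq hK (Measure.measure_pos_of_mem_nhds μ hu₀).ne' hF u₀
  simpa using (hsq.sub ((hmean.sub_const u₀).pow 2)).congr fun ε => (hvar ε).symm

end Variance

theorem tendsto_gibbs_bregmanDiv_quantile {G ψ : ℝ → ℝ} {a b m : ℝ} (hGm : Monotone G)
    (hGc : ContinuousOn G (Icc a b)) (hGs : StrictMonoOn G (Icc a b))
    (hψ : StrictConvexOn ℝ (Icc a b) ψ) (hψc : ContinuousOn ψ (Icc a b))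
    (hψm : DifferentiableAt ℝ ψ m) (hm : m ∈ Ioo a b) :
    Tendsto (gibbsAverage volume (Icc (G a) (G b)) (fun u => bregmanDiv ψ m (quantile G u)) id)
      (𝓝[>] 0) (𝓝 (G m)) ∧
    Tendsto (gibbsVariance volume (Icc (G a) (G b)) (fun u => bregmanDiv ψ m (quantile G u)))
      (𝓝[>] 0) (𝓝 0) := by
  have hmab : m ∈ Icc a b := Ioo_subset_Icc_self hm
  have hab : a ≤ b := hm.1.le.trans hm.2.le
  have hsurj : SurjOn G (Icc a b) (Icc (G a) (G b)) :=
    hGc.surjOn_Icc (left_mem_Icc.2 hab) (right_mem_Icc.2 hab)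
  set H := invFunOn G (Icc a b)
  have hHc : ContinuousOn H (Icc (G a) (G b)) := continuousOn_invFunOn_Icc hab hGc hGs
  have hK : Icc (G a) (G b) ∈ 𝓝 (G m) :=
    Icc_mem_nhds (hGs (left_mem_Icc.2 hab) hmab hm.1) (hGs hmab (right_mem_Icc.2 hab) hm.2)
  have hFc : ContinuousOn (fun u => bregmanDiv ψ m (H u)) (Icc (G a) (G b)) :=
    ((hψc.comp hHc hsurj.mapsTo_invFunOn).sub continuousOn_const).sub
      ((hHc.sub continuousOn_const).mul continuousOn_const)
  have hHm : H (G m) = m := hGs.injOn.leftInvOn_invFunOn hmab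
  have hF₀ : bregmanDiv ψ m (H (G m)) = 0 := by rw [hHm, bregmanDiv_self]
  have hFpos : ∀ u ∈ Icc (G a) (G b), u ≠ G m → 0 < bregmanDiv ψ m (H u) := by
    intro u hu hne
    have hGH : G (H u) = u := hsurj.rightInvOn_invFunOn hu
    exact hψ.bregmanDiv_pos hmab (hsurj.mapsTo_invFunOn hu) hψm fun h => hne (by rw [← hGH, h])
  have hBF : (fun u => bregmanDiv ψ m (quantile G u))
      =ᵐ[volume.restrict (Icc (G a) (G b))] fun u => bregmanDiv ψ m (H u) :=
    (quantile_ae_eq_invFunOn hab hGm hGc hGs).fun_comp (bregmanDiv ψ m)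
  rw [gibbsAverage_congr_ae hBF, gibbsVariance_congr_ae hBF]
  exact ⟨tendsto_gibbsAverage isCompact_Icc hK hFc hF₀ hFpos continuousOn_id,
    tendsto_gibbsVariance isCompact_Icc hK hFc hF₀ hFpos⟩

section Density

variable {a b : ℝ} {g : ℝ → ℝ}

theorem toReal_withDensity_Icc_eq_integral (hgc : ContinuousOn g (Icc a b))
    (hg : ∀ y ∈ Icc a b, 0 ≤ g y) {y : ℝ} (hy : y ∈ Icc a b) :
    (((volume.restrict (Icc a b)).withDensity fun t => ENNReal.ofReal (g t)) (Icc a y)).toReal =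
      ∫ t in a..y, g t := by
  have hsub : Icc a y ⊆ Icc a b := Icc_subset_Icc_right hy.2
  rw [withDensity_apply _ measurableSet_Icc, Measure.restrict_restrict measurableSet_Icc,
    inter_eq_left.2 hsub, intervalIntegral.integral_of_le hy.1, ← integral_Icc_eq_integral_Ioc,
    integral_eq_lintegral_of_nonneg_ae]
  · exact (ae_restrict_mem measurableSet_Icc).mono fun t ht => hg t (hsub ht)
  · exact (hgc.mono hsub).aestronglyMeasurable measurableSet_Icc

theorem ContinuousOn.intervalIntegrable_left_Icc (hgc : ContinuousOn g (Icc a b)) {y : ℝ}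
    (hy : y ∈ Icc a b) : IntervalIntegrable g volume a y :=
  (hgc.mono (Icc_subset_Icc_right hy.2)).intervalIntegrable_of_Icc hy.1

theorem continuousOn_toReal_withDensity_Icc (hgc : ContinuousOn g (Icc a b))
    (hg : ∀ y ∈ Icc a b, 0 ≤ g y) :
    ContinuousOn (fun y => (((volume.restrict (Icc a b)).withDensity
      fun t => ENNReal.ofReal (g t)) (Icc a y)).toReal) (Icc a b) := by
  rcases lt_or_ge b a with hba | hab
  · simp [Icc_eq_empty_of_lt hba]
  have hprim := intervalIntegral.continuousOn_primitive_interval' (μ := volume)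
    (hgc.intervalIntegrable_of_Icc hab) left_mem_uIcc
  rw [uIcc_of_le hab] at hprim
  exact hprim.congr fun y hy => toReal_withDensity_Icc_eq_integral hgc hg hy

theorem strictMonoOn_toReal_withDensity_Icc (hgc : ContinuousOn g (Icc a b))
    (hg : ∀ y ∈ Icc a b, 0 < g y) :
    StrictMonoOn (fun y => (((volume.restrict (Icc a b)).withDensity
      fun t => ENNReal.ofReal (g t)) (Icc a y)).toReal) (Icc a b) := by
  intro y hy y' hy' hyy'
  simp only [toReal_withDensity_Icc_eq_integral hgc (fun t ht => (hg t ht).le) hy,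
    toReal_withDensity_Icc_eq_integral hgc (fun t ht => (hg t ht).le) hy']
  rw [← sub_pos, intervalIntegral.integral_interval_sub_left
    (hgc.intervalIntegrable_left_Icc hy') (hgc.intervalIntegrable_left_Icc hy)]
  exact intervalIntegral.intervalIntegral_pos_of_pos_on
    ((hgc.intervalIntegrable_left_Icc hy).symm.trans (hgc.intervalIntegrable_left_Icc hy'))
    (fun t ht => hg t ⟨hy.1.trans ht.1.le, ht.2.le.trans hy'.2⟩) hyy'

end Density

/-- rank stickiness: for `ν` absolutely continuous on `[a, b]` with
strictly positive continuous density, `G` its CDF and `G⁻¹` its quantile function,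
`ψ` strictly convex and differentiable, `m ∈ (a, b)`, and
`B(u) = ψ(G⁻¹ u) - ψ m - (G⁻¹ u - m)·ψ'(m)` the Bregman exponent, the probability
density on `[0,1]` proportional to `exp(-B(u)/ε)` has mean tending to `G(m)` and
variance tending to `0` as `ε → 0⁺`. -/
theorem stmt9 (a b : ℝ) (hab : a < b)
    (ν : Measure ℝ) [IsProbabilityMeasure ν]
    (g : ℝ → ℝ) (hgc : ContinuousOn g (Set.Icc a b))
    (hgpos : ∀ y ∈ Set.Icc a b, 0 < g y)
    (hν : ν = (volume.restrict (Set.Icc a b)).withDensity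
      fun y => ENNReal.ofReal (g y))
    (G : ℝ → ℝ) (hG : G = fun y => (ν (Set.Icc a y)).toReal)
    (Ginv : ℝ → ℝ) (hGinv : Ginv = fun u => sInf {y : ℝ | u ≤ G y})
    (ψ : ℝ → ℝ) (hψd : Differentiable ℝ ψ) (hψc : StrictConvexOn ℝ Set.univ ψ)
    (m : ℝ) (hm : m ∈ Set.Ioo a b)
    (B : ℝ → ℝ)
    (hB : B = fun u => ψ (Ginv u) - ψ m - (Ginv u - m) * deriv ψ m)
    (mean : ℝ → ℝ)
    (hmean : mean = fun ε =>
      (∫ u in Set.Icc (0 : ℝ) 1, u * Real.exp (-B u / ε))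
        / ∫ u in Set.Icc (0 : ℝ) 1, Real.exp (-B u / ε)) :
    Filter.Tendsto mean (nhdsWithin 0 (Set.Ioi 0)) (nhds (G m)) ∧
    Filter.Tendsto
      (fun ε : ℝ =>
        (∫ u in Set.Icc (0 : ℝ) 1, (u - mean ε) ^ 2 * Real.exp (-B u / ε))
          / ∫ u in Set.Icc (0 : ℝ) 1, Real.exp (-B u / ε))
      (nhdsWithin 0 (Set.Ioi 0)) (nhds 0) := by
  subst hmean hB hGinv
  have hg : ∀ y ∈ Icc a b, 0 ≤ g y := fun y hy => (hgpos y hy).le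
  have hGm : Monotone G := hG ▸ fun y y' h =>
    ENNReal.toReal_mono (measure_ne_top _ _) (measure_mono (Icc_subset_Icc_right h))
  have hGc : ContinuousOn G (Icc a b) := by
    rw [hG, hν]; exact continuousOn_toReal_withDensity_Icc hgc hg
  have hGs : StrictMonoOn G (Icc a b) := by
    rw [hG, hν]; exact strictMonoOn_toReal_withDensity_Icc hgc hgpos
  have hGa : G a = 0 := by
    rw [hG, hν]
    exact (toReal_withDensity_Icc_eq_integral hgc hg (left_mem_Icc.2 hab.le)).trans
      intervalIntegral.integral_same
  have hGb : G b = 1 := by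
    have hout : ν (Icc a b)ᶜ = 0 := by
      rw [hν, withDensity_apply _ measurableSet_Icc.compl,
        Measure.restrict_restrict measurableSet_Icc.compl, compl_inter_self, Measure.restrict_empty,
        lintegral_zero_measure]
    simp only [hG, (prob_compl_eq_zero_iff measurableSet_Icc).1 hout, ENNReal.toReal_one]
  have key := tendsto_gibbs_bregmanDiv_quantile hGm hGc hGs
    (hψc.subset (subset_univ _) (convex_Icc a b)) hψd.continuous.continuousOn (hψd m) hm
  rw [hGa, hGb] at key
  exact key
end

section
/- Let Y be a compact metric space, let μ be a Borel probability measure on Y with full support, and let c > 0. Let w₀ and w₁ be maps assigning to each y ∈ Y Borel probability measures w₀(y, ·) and w₁(y, ·) on Y, such that w₀(y, A) ≥ c·μ(A) for every y ∈ Y and every Borel set A ⊆ Y. Suppose a, b : Y → ℝ are continuous functions satisfying ∫_Y a dμ = 0 and, for all y₀, y₁ ∈ Y, a(y₀) + ∫_Y b(y₁') w₁(y₀, dy₁') = 0 and b(y₁) + ∫_Y a(y₀') w₀(y₁, dy₀') = 0. Then a ≡ 0 and b ≡ 0; that is, the linearized Sinkhorn operator is injective on the gauge-centered subspace of separable continuous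 functions. -/
open MeasureTheory
open scoped ENNReal

/-!
Let `M = max a`. Since `w₀(y, ·) ≥ c • μ` and `∫ a dμ = 0`, integrating `M - a ≥ 0` gives
`∫ a dw₀(y, ·) ≤ (1 - c) M`, i.e. `b ≥ -(1 - c) M`, and then `a = -∫ b dw₁(y, ·) ≤ (1 - c) M`.
At a maximiser this reads `c M ≤ 0`, so `a ≤ 0`. The hypotheses are invariant under
`(a, b) ↦ (-a, -b)`, so also `a ≥ 0`, and then `b = -∫ a dw₀ = 0`.
-/

section

variable {X : Type*} [MeasurableSpace X] {μ ν : Measure X} [IsProbabilityMeasure μ]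
  [IsProbabilityMeasure ν] {f : X → ℝ}

theorem le_integral_of_ae_le {m : ℝ} (hf : Integrable f ν) (hm : ∀ᵐ x ∂ν, m ≤ f x) :
    m ≤ ∫ x, f x ∂ν := by
  simpa using integral_mono_ae (integrable_const m) hf hm

theorem integral_le_of_ofReal_smul_le {c M : ℝ} (hc : 0 ≤ c) (hle : ENNReal.ofReal c • μ ≤ ν)
    (hfμ : Integrable f μ) (hfν : Integrable f ν) (hM : ∀ᵐ x ∂ν, f x ≤ M) :
    ∫ x, f x ∂ν ≤ (1 - c) * M + c * ∫ x, f x ∂μ := by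
  have hmono := integral_mono_measure hle (hM.mono fun x hx => sub_nonneg.2 hx)
    ((integrable_const M).sub hfν)
  rw [integral_smul_measure, ENNReal.toReal_ofReal hc, integral_sub (integrable_const M) hfμ,
    integral_sub (integrable_const M) hfν] at hmono
  simp only [integral_const, probReal_univ, smul_eq_mul] at hmono
  linarith

end

section

variable {Y : Type*} [TopologicalSpace Y] [CompactSpace Y] [MeasurableSpace Y]
  [OpensMeasurableSpace Y] {μ : Measure Y} [IsProbabilityMeasure μ] {c : ℝ}
  {w0 w1 : Y → Measure Y} [∀ y, IsProbabilityMeasure (w0 y)] [∀ y, IsProbabilityMeasure (w1 y)]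

theorem Continuous.integrable_of_compactSpace {E : Type*} [NormedAddCommGroup E]
    {ν : Measure Y} [IsFiniteMeasure ν] {f : Y → E} (hf : Continuous f) : Integrable f ν :=
  hf.integrable_of_hasCompactSupport (.of_compactSpace f)

theorem le_zero_of_linearizedSinkhorn_eq (hc : 0 < c) (hlow : ∀ y, ENNReal.ofReal c • μ ≤ w0 y)
    {a b : Y → ℝ} (ha : Continuous a) (hb : Continuous b) (hgauge : ∫ y, a y ∂μ = 0)
    (heq1 : ∀ y₀, a y₀ + ∫ y, b y ∂(w1 y₀) = 0) (heq2 : ∀ y₁, b y₁ + ∫ y, a y ∂(w0 y₁) = 0)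
    (y : Y) : a y ≤ 0 := by
  have := nonempty_of_isProbabilityMeasure μ
  obtain ⟨yM, hM⟩ := ha.exists_forall_ge_of_hasCompactSupport (.of_compactSpace a)
  have hb_ge : ∀ y₁, -((1 - c) * a yM) ≤ b y₁ := fun y₁ => by
    have := integral_le_of_ofReal_smul_le hc.le (hlow y₁) ha.integrable_of_compactSpace
      ha.integrable_of_compactSpace (ae_of_all _ hM)
    rw [hgauge, mul_zero, add_zero] at this
    linarith [heq2 y₁]
  have ha_le : ∀ y₀, a y₀ ≤ (1 - c) * a yM := fun y₀ => by
    have := le_integral_of_ae_le hb.integrable_of_compactSpace (ae_of_all (w1 y₀) hb_ge)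
    linarith [heq1 y₀]
  nlinarith [hM y, ha_le yM]

end

theorem stmt15_general {Y : Type*} [MetricSpace Y] [CompactSpace Y]
    [MeasurableSpace Y] [BorelSpace Y]
    (μ : Measure Y) [IsProbabilityMeasure μ]
    (c : ℝ) (hc : 0 < c)
    (w0 w1 : Y → Measure Y)
    (hw0 : ∀ y, IsProbabilityMeasure (w0 y)) (hw1 : ∀ y, IsProbabilityMeasure (w1 y))
    (hlow : ∀ y : Y, ∀ A : Set Y, MeasurableSet A → ENNReal.ofReal c * μ A ≤ w0 y A)
    (a b : Y → ℝ) (ha : Continuous a) (hb : Continuous b)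
    (hgauge : ∫ y, a y ∂μ = 0)
    (heq1 : ∀ y₀ : Y, a y₀ + ∫ y₁', b y₁' ∂(w1 y₀) = 0)
    (heq2 : ∀ y₁ : Y, b y₁ + ∫ y₀', a y₀' ∂(w0 y₁) = 0) :
    (∀ y, a y = 0) ∧ (∀ y, b y = 0) := by
  have := hw0
  have := hw1
  have hle : ∀ y, ENNReal.ofReal c • μ ≤ w0 y := fun y => Measure.le_iff.2 fun A hA => hlow y A hA
  have ha_le := le_zero_of_linearizedSinkhorn_eq (w1 := w1) hc hle ha hb hgauge heq1 heq2
  have ha_ge := le_zero_of_linearizedSinkhorn_eq (w1 := w1) hc hle ha.neg hb.neg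
    (by simp only [Pi.neg_apply, integral_neg, hgauge, neg_zero])
    (fun y => by simp only [Pi.neg_apply, integral_neg]; linarith [heq1 y])
    (fun y => by simp only [Pi.neg_apply, integral_neg]; linarith [heq2 y])
  have ha0 : ∀ y, a y = 0 := fun y => le_antisymm (ha_le y) (by simpa using ha_ge y)
  refine ⟨ha0, fun y => ?_⟩
  simpa [ha0] using heq2 y

/-- injectivity of the linearized Sinkhorn operator on the gauge-centered
subspace: if `a, b` are continuous, `∫ a dμ = 0`, the kernels `w₀, w₁` are Markov
kernels with `w₀(y, ·) ≥ c·μ`, and `a(y₀) + ∫ b dw₁(y₀, ·) = 0`,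
`b(y₁) + ∫ a dw₀(y₁, ·) = 0` for all `y₀, y₁`, then `a ≡ 0` and `b ≡ 0`. -/
theorem stmt15 {Y : Type*} [MetricSpace Y] [CompactSpace Y]
    [MeasurableSpace Y] [BorelSpace Y]
    (μ : Measure Y) [IsProbabilityMeasure μ]
    (hfull : ∀ U : Set Y, IsOpen U → U.Nonempty → 0 < μ U)
    (c : ℝ) (hc : 0 < c)
    (w0 w1 : Y → Measure Y)
    (hw0 : ∀ y, IsProbabilityMeasure (w0 y)) (hw1 : ∀ y, IsProbabilityMeasure (w1 y))
    (hlow : ∀ y : Y, ∀ A : Set Y, MeasurableSet A → ENNReal.ofReal c * μ A ≤ w0 y A)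
    (a b : Y → ℝ) (ha : Continuous a) (hb : Continuous b)
    (hgauge : ∫ y, a y ∂μ = 0)
    (heq1 : ∀ y₀ : Y, a y₀ + ∫ y₁', b y₁' ∂(w1 y₀) = 0)
    (heq2 : ∀ y₁ : Y, b y₁ + ∫ y₀', a y₀' ∂(w0 y₁) = 0) :
    (∀ y, a y = 0) ∧ (∀ y, b y = 0) :=
  stmt15_general μ c hc w0 w1 hw0 hw1 hlow a b ha hb hgauge heq1 heq2
end
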